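/- arXiv:1507.00177 — 4 statements merged into one kernel-verified Lean document; each statement's English description precedes it below -/
import Mathlib

section
/- Let F_q be a finite field and let Q be a product of linear polynomials in n variables over F_q such that the linear span of its factors has dimension at most τ. Then there exists a polynomial Q' ∈ F_q[x_1,...,x_n] of total degree at most (q-1)·τ such that Q'(a) = Q(a) for all a ∈ F_q^n. -/
/-!
Choose a basis `B₁, …, B_r` (`r ≤ τ`) of the span of the factors. Then `Q = P(B₁, …, B_r)` for
some polynomial `P` in `r` variables, and `P` agrees on `F_q^r` with a polynomial `P'` of degree
less than `q` in each variable, hence of total degree at most `(q-1)·r`. Since the `Bᵢ` have degree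
at most one, `Q' = P'(B₁, …, B_r)` has total degree at most that of `P'`, and it agrees with `Q`
pointwise.
-/

open MvPolynomial

namespace MvPolynomial

theorem totalDegree_bind₁_le {R σ τ : Type*} [CommSemiring R] (B : σ → MvPolynomial τ R)
    (hB : ∀ i, (B i).totalDegree ≤ 1) (P : MvPolynomial σ R) :
    (bind₁ B P).totalDegree ≤ P.totalDegree := by
  conv_lhs => rw [P.as_sum, map_sum]
  refine totalDegree_finsetSum_le fun d hd => ?_
  rw [bind₁_monomial]
  calc (C (coeff d P) * ∏ i ∈ d.support, B i ^ d i).totalDegree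
      ≤ ∑ i ∈ d.support, (B i ^ d i).totalDegree := by
        refine (totalDegree_mul _ _).trans ?_
        rw [totalDegree_C, zero_add]
        exact totalDegree_finsetProd _ _
    _ ≤ ∑ i ∈ d.support, d i := Finset.sum_le_sum fun i _ =>
        (totalDegree_pow _ _).trans (by simpa using Nat.mul_le_mul_left (d i) (hB i))
    _ ≤ P.totalDegree := le_totalDegree hd

theorem totalDegree_le_of_mem_restrictDegree {R σ : Type*} [CommSemiring R] [Fintype σ]
    {P : MvPolynomial σ R} {m : ℕ} (hP : P ∈ restrictDegree σ R m) :
    P.totalDegree ≤ m * Fintype.card σ := by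
  rw [mem_restrictDegree] at hP
  refine Finset.sup_le fun d hd => ?_
  calc ∑ i ∈ d.support, d i ≤ ∑ i, d i := Finset.sum_le_sum_of_subset (Finset.subset_univ _)
    _ ≤ ∑ _i : σ, m := Finset.sum_le_sum fun i _ => hP d hd i
    _ = m * Fintype.card σ := by simp [mul_comm]

theorem exists_mem_restrictDegree_eval_eq {K σ : Type*} [Field K] [Fintype K] [Finite σ]
    (f : (σ → K) → K) :
    ∃ P ∈ restrictDegree σ K (Fintype.card K - 1), ∀ x, eval x P = f x := by
  have hf : f ∈ (restrictDegree σ K (Fintype.card K - 1)).map (evalₗ K σ) := by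
    rw [map_restrict_dom_evalₗ]; trivial
  obtain ⟨P, hP, hPf⟩ := Submodule.mem_map.mp hf
  exact ⟨P, hP, congrFun hPf⟩

theorem eval_bind₁ {R σ τ : Type*} [CommSemiring R] (B : σ → MvPolynomial τ R) (a : τ → R)
    (P : MvPolynomial σ R) : eval a (bind₁ B P) = eval (fun i => eval a (B i)) P := by
  rw [hom_bind₁]
  congr 1
  ext <;> simp

theorem exists_totalDegree_le_eval_eq_of_mem_adjoin {K σ ι : Type*} [Field K] [Fintype K]
    [Fintype ι] (B : ι → MvPolynomial σ K) (hB : ∀ i, (B i).totalDegree ≤ 1)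
    {Q : MvPolynomial σ K} (hQ : Q ∈ Algebra.adjoin K (Set.range B)) :
    ∃ Q' : MvPolynomial σ K, Q'.totalDegree ≤ (Fintype.card K - 1) * Fintype.card ι ∧
      ∀ a, eval a Q' = eval a Q := by
  rw [Algebra.adjoin_range_eq_range_aeval] at hQ
  obtain ⟨P, rfl⟩ := hQ
  obtain ⟨P', hP', hP'P⟩ := exists_mem_restrictDegree_eval_eq fun y => eval y P
  refine ⟨bind₁ B P', (totalDegree_bind₁_le B hB P').trans
    (totalDegree_le_of_mem_restrictDegree hP'), fun a => ?_⟩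
  rw [eval_bind₁, hP'P]
  exact (eval_bind₁ B a P).symm

end MvPolynomial

/-- A product of linear polynomials over `F_q` whose factors span a space of
dimension at most `τ` agrees, as a function on `F_q^n`, with a polynomial of
total degree at most `(q-1)·τ`. -/
theorem stmt_1 {F : Type} [Field F] [Fintype F] {n τ : ℕ}
    {ι : Type} (s : Finset ι) (L : ι → MvPolynomial (Fin n) F)
    (hdeg : ∀ j ∈ s, (L j).totalDegree ≤ 1)
    (hrank : Module.finrank F (Submodule.span F (L '' ↑s)) ≤ τ) :
    ∃ Q' : MvPolynomial (Fin n) F,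
      Q'.totalDegree ≤ (Fintype.card F - 1) * τ ∧
      ∀ a : Fin n → F, eval a Q' = eval a (∏ j ∈ s, L j) := by
  set V := Submodule.span F (L '' ↑s)
  have : FiniteDimensional F V := FiniteDimensional.span_of_finite F (s.finite_toSet.image L)
  let B := V.subtype ∘ Module.finBasis F V
  have hV_linear : V ≤ restrictTotalDegree (Fin n) F 1 := by
    rw [Submodule.span_le]
    rintro _ ⟨j, hj, rfl⟩
    exact (mem_restrictTotalDegree _ _ _).mpr (hdeg j hj)
  have hB : ∀ i, (B i).totalDegree ≤ 1 := fun i =>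
    (mem_restrictTotalDegree _ _ _).mp (hV_linear (Module.finBasis F V i).2)
  have hV_span : V = Submodule.span F (Set.range B) := by
    rw [Set.range_comp, Submodule.span_image, (Module.finBasis F V).span_eq, Submodule.map_top,
      Submodule.range_subtype]
  have hQ : ∏ j ∈ s, L j ∈ Algebra.adjoin F (Set.range B) :=
    prod_mem fun j hj => Algebra.span_le_adjoin F _ <| hV_span ▸ Submodule.subset_span ⟨j, hj, rfl⟩
  obtain ⟨Q', hQ'deg, hQ'⟩ := exists_totalDegree_le_eval_eq_of_mem_adjoin B hB hQ
  exact ⟨Q', hQ'deg.trans (Nat.mul_le_mul_left _ ((Fintype.card_fin _).le.trans hrank)), hQ'⟩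
end

section
/- Let F be a field, S ⊆ {0,1}^n ⊆ F^n, and 0 ≤ t ≤ n such that every element of S has Hamming weight at most t. Let V be the matrix whose rows are indexed by multilinear monomials of degree at most t in n variables, whose columns are indexed by points a ∈ S, and whose (m, a) entry is the evaluation m(a). Then rank(V) = |S|. -/
/-! Evaluating at `a ∈ S` its characteristic monomial `∏ i ∈ supp a, xᵢ` gives `1`, while at any
other `b ∈ S` of no larger Hamming weight it gives `0`. So the rows of the transposed matrix are
triangular with respect to these pivot columns, ordered by weight, hence linearly independent. -/

open Finset

theorem linearIndependent_of_pivot {ι κ R α : Type*} [Fintype ι] [Ring R] [NoZeroDivisors R]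
    [LinearOrder α] (v : ι → κ → R) (f : ι → κ) (w : ι → α)
    (hpivot : ∀ i, v i (f i) ≠ 0) (hbelow : ∀ i j, j ≠ i → w j ≤ w i → v j (f i) = 0) :
    LinearIndependent R v := by
  classical
  rw [Fintype.linearIndependent_iff]
  intro g hg
  by_contra! ⟨j, hj⟩
  -- a nonzero coefficient of maximal weight survives evaluation at its pivot
  obtain ⟨i, hi, hmax⟩ := (univ.filter (g · ≠ 0)).exists_max_image w ⟨j, by simpa using hj⟩
  have hgi : g i ≠ 0 := (mem_filter.1 hi).2
  have hsum : ∑ j, g j * v j (f i) = g i * v i (f i) := by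
    refine Fintype.sum_eq_single i fun j hji => ?_
    by_cases hgj : g j = 0
    · rw [hgj, zero_mul]
    · rw [hbelow i j hji (hmax j (by simpa using hgj)), mul_zero]
  have hzero : ∑ j, g j * v j (f i) = 0 := by simpa using congrFun hg (f i)
  exact mul_ne_zero hgi (hpivot i) (hsum ▸ hzero)

section Boolean

variable {ι M : Type*} [Fintype ι] [DecidableEq M]

theorem prod_boolean_eq_ite [DecidableEq ι] [CommMonoidWithZero M] {a : ι → M}
    (ha : ∀ i, a i = 0 ∨ a i = 1) (s : Finset ι) :
    ∏ i ∈ s, a i = if s ⊆ univ.filter (fun i => a i = 1) then 1 else 0 := by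
  split_ifs with hs
  · exact prod_eq_one fun i hi => (mem_filter.1 (hs hi)).2
  · obtain ⟨i, hi, hni⟩ := not_subset.1 hs
    exact prod_eq_zero hi ((ha i).resolve_right (by simpa using hni))

theorem eq_of_boolean_of_filter_eq_one [Zero M] [One M] {a b : ι → M}
    (ha : ∀ i, a i = 0 ∨ a i = 1) (hb : ∀ i, b i = 0 ∨ b i = 1)
    (h : univ.filter (fun i => a i = 1) = univ.filter (fun i => b i = 1)) : a = b := by
  funext i
  have hi : a i = 1 ↔ b i = 1 := by simpa using congrArg (i ∈ ·) h
  rcases ha i with ha0 | ha1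
  · rcases hb i with hb0 | hb1
    · rw [ha0, hb0]
    · rw [hi.2 hb1, hb1]
  · rw [ha1, hi.1 ha1]

end Boolean

/-- The matrix of evaluations of all multilinear monomials of degree at most
`t` at a set `S` of Boolean points of Hamming weight at most `t` has rank
exactly `|S|`. -/
theorem stmt_7 {F : Type} [Field F] [DecidableEq F] {n t : ℕ}
    (S : Finset (Fin n → F))
    (hS : ∀ a ∈ S, (∀ i, a i = 0 ∨ a i = 1) ∧
      (Finset.univ.filter (fun i => a i = 1)).card ≤ t) :
    Matrix.rank (fun (m : {s : Finset (Fin n) // s.card ≤ t}) (a : S) =>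
      ∏ i ∈ m.1, (a : Fin n → F) i) = S.card := by
  set supp : S → Finset (Fin n) := fun a => univ.filter (fun i => (a : Fin n → F) i = 1)
  have hprod (a : S) (s : Finset (Fin n)) := prod_boolean_eq_ite (hS a a.2).1 s
  have hindep : LinearIndependent F
      (fun (a : S) (m : {s : Finset (Fin n) // s.card ≤ t}) => ∏ i ∈ m.1, (a : Fin n → F) i) := by
    refine linearIndependent_of_pivot _ (fun a => ⟨supp a, (hS a a.2).2⟩) (fun a => (supp a).card)
      (fun a => by simp [hprod, supp]) fun a b hba hcard => ?_
    rw [hprod, if_neg]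
    intro hsub
    exact hba (Subtype.ext (eq_of_boolean_of_filter_eq_one (hS b b.2).1 (hS a a.2).1
      (eq_of_subset_of_card_le hsub hcard).symm))
  exact (Matrix.rank_transpose (R := F) _).symm.trans
    (hindep.rank_matrix.trans (Fintype.card_coe S))
end

section
/- Let S ⊆ c + {0,1}^n ⊆ F^n be a subset of a translate of the hypercube, with each element of S of the form c + h with Hamming weight of h at most t. Let V(S) be the evaluation matrix of all multilinear monomials of degree at most t at the points of S, and let V(S − c) be the matrix whose rows are the evaluations of the translated polynomials m(x − c) at the points of S, for each multilinear monomial m of degree at most t. Then rank(V(S)) = rank(V(S − c)) = |S|. -/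
/-!
Among the rows of `V(S - c)`, those indexed by the supports `supp (a - c)`, `a ∈ S`, form the
inclusion matrix `[supp (a - c) ⊆ supp (b - c)]`, which is unitriangular once the points are
ordered by Hamming weight. Hence `V(S - c)` has full column rank `|S|`. Expanding `m(x - c)`
into monomials of degree at most `deg m` puts the row space of `V(S - c)` inside that of `V(S)`,
so `V(S)` has rank `|S|` too.
-/

open Finset Matrix

theorem Matrix.rank_eq_card_width_of_isUnit_submatrix {m n R : Type*} [Fintype n] [DecidableEq n]
    [CommRing R] [StrongRankCondition R] (A : Matrix m n R) (r : n → m)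
    (h : IsUnit (A.submatrix r id)) : A.rank = Fintype.card n :=
  le_antisymm A.rank_le_card_width <| by
    simpa only [rank_of_isUnit _ h] using A.rank_submatrix_le r id

theorem Matrix.det_of_ite_subset_eq_one {ι α R : Type*} [Fintype ι] [DecidableEq ι]
    [DecidableEq α] [CommRing R] {D : ι → Finset α} (hD : Function.Injective D) :
    (Matrix.of fun a b => if D a ⊆ D b then (1 : R) else 0).det = 1 := by
  set B : Matrix ι ι R := Matrix.of fun a b => if D a ⊆ D b then 1 else 0
  have hB : B.BlockTriangular fun a => (D a).card := fun a b hlt =>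
    if_neg fun hsub => (card_le_card hsub).not_gt hlt
  rw [hB.det]
  refine prod_eq_one fun k _ => ?_
  suffices B.toSquareBlock (fun a => (D a).card) k = 1 by rw [this, det_one]
  ext ⟨a, ha⟩ ⟨b, hb⟩
  by_cases hab : a = b
  · subst hab
    simp [B, toSquareBlock_def]
  · have hne : ¬ D a ⊆ D b := fun hsub =>
      hab (hD (eq_of_subset_of_card_le hsub (ha.trans hb.symm).ge))
    simp [B, toSquareBlock_def, hne, one_apply_ne, hab]

theorem prod_sub_eq_sum_powerset {σ R : Type*} [DecidableEq σ] [CommRing R] (x c : σ → R)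
    (s : Finset σ) :
    ∏ i ∈ s, (x i - c i) = ∑ u ∈ s.powerset, (∏ i ∈ s \ u, -c i) * ∏ i ∈ u, x i := by
  simp only [sub_eq_add_neg, prod_add, mul_comm]

section SmallSubsets

variable {σ : Type*} [Fintype σ] [DecidableEq σ]

theorem sum_smallSubsets_eq_sum_powerset {M : Type*} [AddCommMonoid M] {t : ℕ} {s : Finset σ}
    (hs : s.card ≤ t) (f : Finset σ → M) :
    ∑ u : {u : Finset σ // u.card ≤ t}, (if u.1 ⊆ s then f u.1 else 0) =
      ∑ u ∈ s.powerset, f u := by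
  rw [← sum_subtype (univ.filter fun u : Finset σ => u.card ≤ t) (by simp)
    (fun u => if u ⊆ s then f u else 0), ← sum_filter, filter_filter]
  congr 1
  ext u
  simp only [mem_filter, mem_univ, true_and, mem_powerset]
  exact ⟨And.right, fun hu => ⟨(card_le_card hu).trans hs, hu⟩⟩

theorem rank_prod_sub_le_rank_prod {ι R : Type*} [Fintype ι] [CommRing R]
    [StrongRankCondition R] (t : ℕ) (x : ι → σ → R) (c : σ → R) :
    Matrix.rank (fun (m : {s : Finset σ // s.card ≤ t}) a => ∏ i ∈ m.1, (x a i - c i)) ≤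
      Matrix.rank (fun (m : {s : Finset σ // s.card ≤ t}) a => ∏ i ∈ m.1, x a i) := by
  let M : Matrix {s : Finset σ // s.card ≤ t} ι R := fun m a => ∏ i ∈ m.1, x a i
  let L : Matrix {s : Finset σ // s.card ≤ t} {s : Finset σ // s.card ≤ t} R :=
    fun m u => if u.1 ⊆ m.1 then ∏ i ∈ m.1 \ u.1, -c i else 0
  have hL : (fun (m : {s : Finset σ // s.card ≤ t}) a => ∏ i ∈ m.1, (x a i - c i)) = L * M := by
    ext m a
    rw [mul_apply]
    simp only [L, M, ite_mul, zero_mul]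
    rw [sum_smallSubsets_eq_sum_powerset m.2 (fun u => (∏ i ∈ m.1 \ u, -c i) * ∏ i ∈ u, x a i),
      prod_sub_eq_sum_powerset]
  rw [hL]
  exact rank_mul_le_right L M

end SmallSubsets

section BooleanPoints

variable {σ R : Type*} [Fintype σ] [CommRing R] [DecidableEq R] {a b c : σ → R}

theorem prod_sub_eq_ite_subset [DecidableEq σ] (ha : ∀ i, a i - c i = 0 ∨ a i - c i = 1)
    (s : Finset σ) :
    ∏ i ∈ s, (a i - c i) = if s ⊆ univ.filter (fun i => a i - c i = 1) then 1 else 0 := by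
  split_ifs with hs
  · exact prod_eq_one fun i hi => (mem_filter.mp (hs hi)).2
  · obtain ⟨i, hi, hi1⟩ := not_subset.mp hs
    exact prod_eq_zero hi ((ha i).resolve_right (by simpa using hi1))

theorem eq_of_filter_sub_eq_one_eq (ha : ∀ i, a i - c i = 0 ∨ a i - c i = 1)
    (hb : ∀ i, b i - c i = 0 ∨ b i - c i = 1)
    (h : univ.filter (fun i => a i - c i = 1) = univ.filter (fun i => b i - c i = 1)) :
    a = b := by
  funext i
  have hi : a i - c i = 1 ↔ b i - c i = 1 := by simpa using congrArg (i ∈ ·) h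
  refine sub_left_injective (b := c i) (show a i - c i = b i - c i from ?_)
  by_cases ha1 : a i - c i = 1
  · exact ha1.trans (hi.mp ha1).symm
  · rw [(ha i).resolve_right ha1, (hb i).resolve_right (mt hi.mpr ha1)]

end BooleanPoints

/-- For `S ⊆ c + {0,1}^n` with each point of the form `c + h`, `h` of Hamming
weight at most `t`: both the matrix of evaluations of multilinear monomials of
degree at most `t` at the points of `S`, and the matrix of evaluations of
their translates `m(x - c)`, have rank exactly `|S|`. -/
theorem stmt_8 {F : Type} [Field F] [DecidableEq F] {n t : ℕ} (c : Fin n → F)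
    (S : Finset (Fin n → F))
    (hS : ∀ a ∈ S, (∀ i, a i - c i = 0 ∨ a i - c i = 1) ∧
      (Finset.univ.filter (fun i => a i - c i = 1)).card ≤ t) :
    Matrix.rank (fun (m : {s : Finset (Fin n) // s.card ≤ t}) (a : S) =>
        ∏ i ∈ m.1, (a : Fin n → F) i) = S.card ∧
    Matrix.rank (fun (m : {s : Finset (Fin n) // s.card ≤ t}) (a : S) =>
        ∏ i ∈ m.1, ((a : Fin n → F) i - c i)) = S.card := by
  let D : S → Finset (Fin n) := fun a => univ.filter fun i => (a : Fin n → F) i - c i = 1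
  have hD : Function.Injective D := fun a b hab =>
    Subtype.ext (eq_of_filter_sub_eq_one_eq (hS a a.2).1 (hS b b.2).1 hab)
  have h_translate : Matrix.rank (fun (m : {s : Finset (Fin n) // s.card ≤ t}) (a : S) =>
      ∏ i ∈ m.1, ((a : Fin n → F) i - c i)) = S.card := by
    rw [← Fintype.card_coe S]
    refine rank_eq_card_width_of_isUnit_submatrix _ (fun a => ⟨D a, (hS a a.2).2⟩) ?_
    rw [isUnit_iff_isUnit_det]
    convert isUnit_one using 1
    convert det_of_ite_subset_eq_one hD using 2
    ext a b
    exact prod_sub_eq_ite_subset (hS b b.2).1 (D a)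
  refine ⟨le_antisymm ?_ ?_, h_translate⟩
  · exact (rank_le_card_width _).trans_eq (Fintype.card_coe S)
  · exact h_translate ▸ rank_prod_sub_le_rank_prod t (fun a : S => (a : Fin n → F)) c
end

section
/- For the Nisan–Wigderson polynomial NW_{d,m,e}, any two distinct monomials appearing in it agree in at most e−1 of the d coordinate blocks; consequently, any nonzero k-th order partial derivative of NW_{d,m,e} with respect to distinct variables x_{1,a_1},...,x_{k,a_k} has exactly m^{e−k} monomials (for k ≤ e), and any two distinct monomials of such a derivative agree in at most e−k−1 additional blocks. -/
/-! Write `p_c` for the polynomial of degree `< e` with coefficient vector `c`; the monomial of `c`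
is the squarefree monomial on the graph of `i ↦ p_c (ι i)`. Two distinct polynomials of degree
`< e` agree at fewer than `e` points, which bounds the blocks shared by two monomials; when both
`p_c` take the values `a_i` at the first `k` points, those `k` blocks are among the shared ones.

Differentiating a squarefree monomial along distinct variables either kills it or deletes those
variables, so the derivative is a sum of distinct squarefree monomials, one for each `c` with
`p_c (ι i) = a_i` for `i < k`. By Lagrange interpolation, evaluation at `k ≤ e` distinct points is
a surjective additive map `K^e → K^k`, so each of its fibres has `|K|^(e-k)` elements. -/

open MvPolynomial

def polyEval {K : Type} [Field K] {e : ℕ} (c : Fin e → K) (x : K) : K :=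
  ∑ j : Fin e, c j * x ^ (j : ℕ)

open Finset

section Polynomial

open Polynomial

theorem Polynomial.card_filter_eval_eq_lt {R α : Type*} [CommRing R] [IsDomain R] [Fintype α]
    [DecidableEq R] {v : α → R} (hv : Function.Injective v) {f g : R[X]} (hfg : f ≠ g) {n : ℕ}
    (hf : f.degree < n) (hg : g.degree < n) :
    #{i | f.eval (v i) = g.eval (v i)} < n := by
  by_contra! h
  exact hfg <| eq_of_degrees_lt_of_eval_index_eq _ hv.injOn
    (hf.trans_le (by exact_mod_cast h)) (hg.trans_le (by exact_mod_cast h))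
    fun i hi => (mem_filter.mp hi).2

variable {K : Type} [Field K] {e k : ℕ}

theorem polyEval_eq_eval (c : Fin e → K) (x : K) :
    polyEval c x = ((degreeLTEquiv K e).symm c : K[X]).eval x := by
  rw [eval_eq_sum_degreeLTEquiv (Submodule.coe_mem _)]
  simp [polyEval]

theorem card_filter_polyEval_eq_lt [DecidableEq K] {α : Type*} [Fintype α] {v : α → K}
    (hv : Function.Injective v) {c c' : Fin e → K} (hcc' : c ≠ c') :
    #{i | polyEval c (v i) = polyEval c' (v i)} < e := by
  simp only [polyEval_eq_eval]
  exact card_filter_eval_eq_lt hv (by simpa using hcc')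
    (mem_degreeLT.mp (Submodule.coe_mem _)) (mem_degreeLT.mp (Submodule.coe_mem _))

variable (e) in
def polyEvalHom (x : Fin k → K) : (Fin e → K) →+ (Fin k → K) :=
  AddMonoidHom.mk' (fun c i => polyEval c (x i)) fun c c' => by
    ext i
    simp [polyEval, add_mul, sum_add_distrib]

theorem polyEvalHom_apply (x : Fin k → K) (c : Fin e → K) (i : Fin k) :
    polyEvalHom e x c i = polyEval c (x i) := rfl

theorem polyEvalHom_surjective (hk : k ≤ e) {x : Fin k → K} (hx : Function.Injective x) :
    Function.Surjective (polyEvalHom e x) := by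
  intro b
  have hdeg : Lagrange.interpolate univ x b ∈ degreeLT K e := by
    rw [mem_degreeLT]
    refine (Lagrange.degree_interpolate_lt _ hx.injOn).trans_le ?_
    simpa using hk
  refine ⟨degreeLTEquiv K e ⟨_, hdeg⟩, funext fun i => ?_⟩
  rw [polyEvalHom_apply, polyEval_eq_eval, LinearEquiv.symm_apply_apply,
    Lagrange.eval_interpolate_at_node _ hx.injOn (mem_univ i)]

theorem card_filter_forall_polyEval_eq [Fintype K] [DecidableEq K] (hk : k ≤ e)
    {x : Fin k → K} (hx : Function.Injective x) (a : Fin k → K) :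
    #{c : Fin e → K | ∀ i, polyEval c (x i) = a i} = Fintype.card K ^ (e - k) := by
  have hsurj := polyEvalHom_surjective hk hx
  have hfiber : ∀ b, #{c | polyEvalHom e x c = b} = #{c | polyEvalHom e x c = a} :=
    fun b => AddMonoidHom.card_fiber_eq_of_mem_range _ (hsurj b) (hsurj a)
  have hcount : Fintype.card K ^ k * Fintype.card K ^ (e - k) =
      Fintype.card K ^ k * #{c | polyEvalHom e x c = a} := by
    calc Fintype.card K ^ k * Fintype.card K ^ (e - k)
        = #(univ : Finset (Fin e → K)) := by simp [← pow_add, Nat.add_sub_cancel' hk]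
      _ = ∑ b : Fin k → K, #{c | polyEvalHom e x c = b} :=
        card_eq_sum_card_fiberwise fun _ _ => mem_univ _
      _ = Fintype.card K ^ k * #{c | polyEvalHom e x c = a} := by simp [hfiber]
  simpa [funext_iff, polyEvalHom_apply, eq_comm (a := Fintype.card K ^ (e - k))] using
    Nat.eq_of_mul_eq_mul_left (by positivity) hcount

end Polynomial

section SquarefreeMonomial

variable {R σ : Type*} [CommRing R] [DecidableEq σ]

theorem MvPolynomial.pderiv_prod_X (w : σ) (t : Finset σ) :
    pderiv w (∏ v ∈ t, (X v : MvPolynomial σ R)) =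
      if w ∈ t then ∏ v ∈ t.erase w, X v else 0 := by
  induction t using Finset.induction_on with
  | empty => simp
  | insert a t ha ih =>
    rw [prod_insert ha, pderiv_mul, ih]
    rcases eq_or_ne w a with rfl | hwa
    · simp [ha]
    · have ha' : a ∉ t.erase w := fun h => ha (mem_of_mem_erase h)
      by_cases hwt : w ∈ t <;>
        simp [pderiv_X_of_ne hwa.symm, hwa, hwt, erase_insert_of_ne hwa.symm, prod_insert ha']

theorem MvPolynomial.foldr_pderiv_prod_X {L : List σ} (hL : L.Nodup) (t : Finset σ) :
    L.foldr (fun v p => pderiv v p) (∏ v ∈ t, (X v : MvPolynomial σ R)) =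
      if ∀ w ∈ L, w ∈ t then ∏ v ∈ t \ L.toFinset, X v else 0 := by
  induction L with
  | nil => simp
  | cons w L ih =>
    obtain ⟨hwL, hL⟩ := List.nodup_cons.mp hL
    rw [List.foldr_cons, ih hL]
    by_cases hLt : ∀ w ∈ L, w ∈ t
    · rw [if_pos hLt, pderiv_prod_X]
      simp only [List.forall_mem_cons, eq_true hLt, and_true, List.toFinset_cons, sdiff_insert,
        mem_sdiff, List.mem_toFinset, hwL, not_false_eq_true]
    · simp [hLt]

omit [DecidableEq σ] in
theorem MvPolynomial.foldr_pderiv_sum {ι : Type*} (L : List σ) (s : Finset ι)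
    (f : ι → MvPolynomial σ R) :
    L.foldr (fun v p => pderiv v p) (∑ i ∈ s, f i) =
      ∑ i ∈ s, L.foldr (fun v p => pderiv v p) (f i) := by
  induction L with
  | nil => rfl
  | cons v L ih => rw [List.foldr_cons, ih, map_sum]; rfl

omit [DecidableEq σ] in
theorem MvPolynomial.support_sum_monomial_one [Nontrivial R] (S : Finset (σ →₀ ℕ)) :
    (∑ s ∈ S, monomial s (1 : R)).support = S := by
  classical
  ext m
  simp [coeff_sum, coeff_monomial]

omit [DecidableEq σ] in
theorem MvPolynomial.prod_X_eq_monomial_sum_single (t : Finset σ) :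
    ∏ v ∈ t, (X v : MvPolynomial σ R) = monomial (∑ v ∈ t, Finsupp.single v 1) 1 :=
  (monomial_sum_one t _).symm

theorem MvPolynomial.card_support_sum_prod_X [Nontrivial R] (U : Finset (Finset σ)) :
    (∑ u ∈ U, ∏ v ∈ u, (X v : MvPolynomial σ R)).support.card = #U := by
  have hinj : Function.Injective fun u : Finset σ => ∑ v ∈ u, Finsupp.single v 1 := by
    intro u u' h
    simpa using congr_arg Finsupp.toMultiset h
  have := sum_image (s := U) (f := fun s => monomial s (1 : R)) hinj.injOn
  simp only [prod_X_eq_monomial_sum_single, ← this, support_sum_monomial_one,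
    card_image_of_injective _ hinj]

end SquarefreeMonomial

section DerivVars

variable {α : Type*} {d k : ℕ}

def derivVars (hkd : k ≤ d) (a : Fin k → α) : List (Fin d × α) :=
  List.ofFn fun i => (Fin.castLE hkd i, a i)

theorem derivVars_nodup (hkd : k ≤ d) (a : Fin k → α) : (derivVars hkd a).Nodup :=
  List.nodup_ofFn.mpr fun _ _ h => Fin.castLE_injective hkd (Prod.mk.inj h).1

theorem lt_of_mem_derivVars {hkd : k ≤ d} {a : Fin k → α} {v : Fin d × α}
    (hv : v ∈ derivVars hkd a) : (v.1 : ℕ) < k := by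
  obtain ⟨i, rfl⟩ := List.mem_ofFn.mp hv
  exact i.isLt

end DerivVars

section NisanWigderson

variable {K : Type} [Field K] [DecidableEq K] {d e k : ℕ}

noncomputable def nisanWigderson [Fintype K] (d e : ℕ) (ι : Fin d → K) :
    MvPolynomial (Fin d × K) K :=
  ∑ c : Fin e → K, ∏ i : Fin d, X (i, polyEval c (ι i))

def polyGraph (ι : Fin d → K) (c : Fin e → K) : Finset (Fin d × K) :=
  univ.image fun i => (i, polyEval c (ι i))

@[simp]
theorem mem_polyGraph {ι : Fin d → K} {c : Fin e → K} {j : Fin d} {b : K} :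
    (j, b) ∈ polyGraph ι c ↔ polyEval c (ι j) = b := by
  simp [polyGraph]

theorem prod_X_eq_prod_polyGraph (ι : Fin d → K) (c : Fin e → K) :
    ∏ i : Fin d, (X (i, polyEval c (ι i)) : MvPolynomial (Fin d × K) K) =
      ∏ v ∈ polyGraph ι c, X v :=
  (prod_image fun _ _ _ _ h => (Prod.mk.inj h).1).symm

theorem foldr_pderiv_nisanWigderson [Fintype K] (ι : Fin d → K) (hkd : k ≤ d) (a : Fin k → K) :
    (derivVars hkd a).foldr (fun v p => pderiv v p) (nisanWigderson d e ι) =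
      ∑ c ∈ {c : Fin e → K | ∀ i, polyEval c (ι (Fin.castLE hkd i)) = a i},
        ∏ v ∈ polyGraph ι c \ (derivVars hkd a).toFinset, X v := by
  simp only [nisanWigderson, foldr_pderiv_sum, prod_X_eq_prod_polyGraph,
    foldr_pderiv_prod_X (derivVars_nodup hkd a), sum_filter]
  congr! 2
  simp [derivVars]

theorem card_filter_le_and_polyEval_eq_add_lt {ι : Fin d → K} (hι : Function.Injective ι)
    (hkd : k ≤ d) {a : Fin k → K} {c c' : Fin e → K}
    (hc : ∀ i, polyEval c (ι (Fin.castLE hkd i)) = a i)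
    (hc' : ∀ i, polyEval c' (ι (Fin.castLE hkd i)) = a i) (hcc' : c ≠ c') :
    #{i : Fin d | k ≤ (i : ℕ) ∧ polyEval c (ι i) = polyEval c' (ι i)} + k < e := by
  set A : Finset (Fin d) := {i | polyEval c (ι i) = polyEval c' (ι i)}
  have hlow :
      A.filter (fun i : Fin d => ¬k ≤ (i : ℕ)) = univ.filter fun i : Fin d => (i : ℕ) < k := by
    ext i
    simp only [A, mem_filter, mem_univ, true_and, not_le, and_iff_right_iff_imp]
    intro hi
    simpa using (hc ⟨i, hi⟩).trans (hc' ⟨i, hi⟩).symm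
  have hsplit := card_filter_add_card_filter_not (s := A) (fun i : Fin d => k ≤ (i : ℕ))
  rw [hlow, Fin.card_filter_val_lt, min_eq_right hkd, filter_filter] at hsplit
  simpa [A, hsplit, and_comm] using card_filter_polyEval_eq_lt hι hcc'

theorem eq_of_polyGraph_sdiff_derivVars_eq (he : e ≤ d) {ι : Fin d → K}
    (hι : Function.Injective ι) {hkd : k ≤ d} {a : Fin k → K} {c c' : Fin e → K}
    (hc : ∀ i, polyEval c (ι (Fin.castLE hkd i)) = a i)
    (hc' : ∀ i, polyEval c' (ι (Fin.castLE hkd i)) = a i)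
    (hgraph : polyGraph ι c \ (derivVars hkd a).toFinset =
      polyGraph ι c' \ (derivVars hkd a).toFinset) :
    c = c' := by
  by_contra hcc'
  have hagree : ∀ j : Fin d, polyEval c (ι j) = polyEval c' (ι j) := by
    intro j
    by_cases hj : (j : ℕ) < k
    · simpa using (hc ⟨j, hj⟩).trans (hc' ⟨j, hj⟩).symm
    · have hmem : (j, polyEval c (ι j)) ∈ polyGraph ι c \ (derivVars hkd a).toFinset := by
        simp only [mem_sdiff, mem_polyGraph, List.mem_toFinset, true_and]
        exact fun h => hj (lt_of_mem_derivVars h)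
      rw [hgraph, mem_sdiff, mem_polyGraph] at hmem
      exact hmem.1.symm
  have := card_filter_polyEval_eq_lt hι hcc'
  simp [hagree] at this
  omega

theorem card_support_foldr_pderiv_nisanWigderson [Fintype K] (he : e ≤ d) (hk : k ≤ e)
    {ι : Fin d → K} (hι : Function.Injective ι) (a : Fin k → K) :
    ((derivVars (hk.trans he) a).foldr (fun v p => pderiv v p)
      (nisanWigderson d e ι)).support.card = Fintype.card K ^ (e - k) := by
  set S : Finset (Fin e → K) := {c | ∀ i, polyEval c (ι (Fin.castLE (hk.trans he) i)) = a i}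
  have hinj : Set.InjOn (fun c => polyGraph ι c \ (derivVars (hk.trans he) a).toFinset) S :=
    fun c hc c' hc' => eq_of_polyGraph_sdiff_derivVars_eq he hι (mem_filter.mp hc).2
      (mem_filter.mp hc').2
  rw [foldr_pderiv_nisanWigderson,
    ← card_filter_forall_polyEval_eq hk (x := fun i => ι (Fin.castLE (hk.trans he) i))
      (hι.comp (Fin.castLE_injective _)) a,
    ← card_image_of_injOn hinj, ← card_support_sum_prod_X (R := K), sum_image hinj]

end NisanWigderson

/-- Properties of the Nisan–Wigderson polynomial
`NW = Σ_{p : deg p < e} Π_i X_{(i, p(ι i))}` (monomials indexed by coefficient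
vectors `c : Fin e → K` of polynomials of degree `< e` over the finite field
`K`, evaluated at `d` distinct points `ι i`):
1. two distinct monomials agree in at most `e - 1` of the `d` blocks;
2. the `k`-th order partial derivative with respect to the distinct variables
   `(1, a_1), ..., (k, a_k)` (for `k ≤ e`) has exactly `|K|^{e-k}` monomials;
3. two distinct monomials of such a derivative agree in at most `e - k - 1`
   of the remaining blocks. -/
theorem stmt_15 {K : Type} [Field K] [Fintype K] [DecidableEq K]
    {d e k : ℕ} (he : e ≤ d) (hk : k ≤ e)
    (ι : Fin d → K) (hι : Function.Injective ι) (a : Fin k → K) :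
    (∀ c c' : Fin e → K, c ≠ c' →
      (Finset.univ.filter (fun i : Fin d =>
        polyEval c (ι i) = polyEval c' (ι i))).card ≤ e - 1) ∧
    ((List.ofFn (fun i : Fin k =>
        ((Fin.castLE (hk.trans he) i, a i) : Fin d × K))).foldr
        (fun v p => pderiv v p)
        (∑ c : Fin e → K, ∏ i : Fin d,
          (X (i, polyEval c (ι i)) : MvPolynomial (Fin d × K) K))).support.card
      = Fintype.card K ^ (e - k) ∧
    (∀ c c' : Fin e → K,
      (∀ i : Fin k, polyEval c (ι (Fin.castLE (hk.trans he) i)) = a i) →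
      (∀ i : Fin k, polyEval c' (ι (Fin.castLE (hk.trans he) i)) = a i) →
      c ≠ c' →
      (Finset.univ.filter (fun i : Fin d => k ≤ (i : ℕ) ∧
        polyEval c (ι i) = polyEval c' (ι i))).card ≤ e - k - 1) := by
  refine ⟨fun c c' hcc' => Nat.le_sub_one_of_lt (card_filter_polyEval_eq_lt hι hcc'),
    card_support_foldr_pderiv_nisanWigderson he hk hι a, fun c c' hc hc' hcc' => ?_⟩
  have := card_filter_le_and_polyEval_eq_add_lt hι (hk.trans he) hc hc' hcc'
  omega
end
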